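/- In the two-stage game where stage 1 is the 2x2 game with row/column strategies {A, B} and payoffs u1(A,A)=(0,0), u1(A,B)=(0,0), u1(B,A)=(1,3), u1(B,B)=(4,2), and stage 2 has payoffs u2(A,A)=(1,1), u2(A,B)=(1,1), u2(B,A)=(1,3), u2(B,B)=(1,3), with δ = 1, the following profile is a credible equilibrium: Row plays B in stage 1, plays B in stage 2 if (B,B) occurred in stage 1 and A otherwise; Column plays B in both stages after every history. In particular, this credible equilibrium supports the outcome (B,B) in stage 1, which is not a Nash equilibrium of the stage-1 game. -/

import Mathlib

/-!  A formal model of multi-stage games (Ismail, "Credible equilibrium").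

A multi-stage game `G = (G^1, …, G^T)` is modeled by stage strategy spaces
`A t i` (possibly mixed strategies) for each stage `t` and player `i`, stage
payoff functions `u i t`, and a discount factor `δ`; a finite horizon `T` is
the special case where stage payoffs vanish from stage `T` on.  A subgame is
identified by a stage `k` together with a history (a path, of which only the
first `k` entries matter); two subgames are equivalent iff they start at the
same stage.  -/

namespace MSG

variable {ι : Type}

/-- A path of play: an action profile at every stage. -/
abbrev PlayPath (A : ℕ → ι → Type) := ∀ t, ∀ i, A t i

/-- A strategy of player `i`: an action at every stage `t` as a function of the
history, depending only on play before stage `t`. -/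
structure PStrat (A : ℕ → ι → Type) (i : ι) where
  act : ∀ t, PlayPath A → A t i
  adapted : ∀ t (p q : PlayPath A), (∀ s, s < t → p s = q s) → act t p = act t q

/-- A strategy profile. -/
abbrev Profile (A : ℕ → ι → Type) := ∀ i, PStrat A i

/-- The play induced by profile `σ` in the subgame starting at stage `k` after
history `h`, computed up to stage `n`. -/
noncomputable def outcomeUpTo (A : ℕ → ι → Type) (σ : Profile A) (k : ℕ) (h : PlayPath A) :
    ℕ → PlayPath A
  | 0 => h
  | t + 1 =>
    Function.update (outcomeUpTo A σ k h t) t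
      (if t < k then h t else fun i => (σ i).act t (outcomeUpTo A σ k h t))

/-- The path of play induced by `σ` from the subgame `(k, h)`. -/
noncomputable def outcome (A : ℕ → ι → Type) (σ : Profile A) (k : ℕ) (h : PlayPath A) :
    PlayPath A :=
  fun t => outcomeUpTo A σ k h (t + 1) t

/-- Player `i`'s discounted payoff in the subgame starting at stage `k` after
history `h` under profile `σ`. -/
noncomputable def subPayoff (A : ℕ → ι → Type) (u : ι → ∀ t, (∀ i, A t i) → ℝ) (δ : ℝ)
    (σ : Profile A) (k : ℕ) (h : PlayPath A) (i : ι) : ℝ :=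
  ∑' t : ℕ, δ ^ t * u i (k + t) (outcome A σ k h (k + t))

/-- `σ` restricted to the subgame `(k, h)` is a Nash equilibrium. -/
def NashFrom [DecidableEq ι] (A : ℕ → ι → Type) (u : ι → ∀ t, (∀ i, A t i) → ℝ) (δ : ℝ)
    (σ : Profile A) (k : ℕ) (h : PlayPath A) : Prop :=
  ∀ i (τ : PStrat A i),
    subPayoff A u δ (Function.update σ i τ) k h i ≤ subPayoff A u δ σ k h i

/-- Subgame perfect equilibrium: Nash in every subgame. -/
def SPE [DecidableEq ι] (A : ℕ → ι → Type) (u : ι → ∀ t, (∀ i, A t i) → ℝ) (δ : ℝ)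
    (σ : Profile A) : Prop :=
  ∀ k h, NashFrom A u δ σ k h

/-- Replace the first `k` stages of `p` by the history `h`. -/
def splice (A : ℕ → ι → Type) (k : ℕ) (h p : PlayPath A) : PlayPath A :=
  fun s => if s < k then h s else p s

/-- Player `i`'s strategy `σi` has the same restriction to the equivalent
subgames `(k, h)` and `(k, h')`. -/
def SameRestriction (A : ℕ → ι → Type) {i : ι} (σi : PStrat A i) (k : ℕ)
    (h h' : PlayPath A) : Prop :=
  ∀ t, k ≤ t → ∀ p : PlayPath A, σi.act t (splice A k h p) = σi.act t (splice A k h' p)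

/-- Credible equilibrium: an SPE such that whenever a player's strategy differs
on two equivalent subgames, her payoffs in those subgames coincide. -/
def Credible [DecidableEq ι] (A : ℕ → ι → Type) (u : ι → ∀ t, (∀ i, A t i) → ℝ) (δ : ℝ)
    (σ : Profile A) : Prop :=
  SPE A u δ σ ∧ ∀ k (h h' : PlayPath A) i, ¬ SameRestriction A (σ i) k h h' →
    subPayoff A u δ σ k h i = subPayoff A u δ σ k h' i

end MSG

namespace MSG

/-- Two-stage game payoffs.  Players: `true` = Row, `false` = Column; actions:
`true` = B, `false` = A.  Stage 1 (index `0`): `u(A,·) = (0,0)`,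
`u(B,A) = (1,3)`, `u(B,B) = (4,2)`.  Stage 2 (index `1`): Row always gets `1`;
Column gets `3` if Row plays B and `1` otherwise.  No payoffs afterwards. -/
def twoStageU : Bool → ∀ _ : ℕ, (Bool → Bool) → ℝ :=
  fun i t p =>
    if t = 0 then
      (if i then (if p true then (if p false then 4 else 1) else 0)
       else (if p true then (if p false then 2 else 3) else 0))
    else if t = 1 then (if i then 1 else (if p true then 3 else 1))
    else 0

/-- The profile: Row plays B in stage 1 and, in stage 2, plays B if `(B,B)`
occurred in stage 1 and A otherwise; Column plays B always. -/
def twoStageProfile : Profile (fun (_ : ℕ) (_ : Bool) => Bool) :=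
  fun i =>
    match i with
    | true =>
      { act := fun t h => if t = 0 then true else (h 0 true && h 0 false)
        adapted := by
          intro t p q hpq
          cases t with
          | zero => rfl
          | succ t => have h0 : p 0 = q 0 := hpq 0 (Nat.succ_pos t); simp [h0] }
    | false => ⟨fun _ _ => true, fun _ _ _ _ => rfl⟩

end MSG

/-! Row's stage-2 payoff is `1` whatever happens, so she can credibly condition her stage-2
action on stage 1: playing B after `(B,B)` gives Column `3`, playing A otherwise gives her `1`.
Deviating to A at stage 1 raises Column's stage-1 payoff from `2` to `3` but costs her `2` at
stage 2, while Row already gets the largest total payoff `4 + 1` available to her. -/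

namespace MSG

section Outcome

variable {ι : Type} {A : ℕ → ι → Type} (σ : Profile A) (k : ℕ) (h : PlayPath A)

theorem outcomeUpTo_of_lt {n s : ℕ} (hs : s < n) :
    outcomeUpTo A σ k h n s = outcome A σ k h s := by
  induction n with
  | zero => omega
  | succ n ih =>
    rcases (Nat.lt_succ_iff_lt_or_eq.mp hs) with hs | rfl
    · rw [outcomeUpTo, Function.update_of_ne hs.ne, ih hs]
    · rfl

theorem outcome_of_lt {t : ℕ} (ht : t < k) : outcome A σ k h t = h t := by
  show outcomeUpTo A σ k h (t + 1) t = h t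
  rw [outcomeUpTo, Function.update_self, if_pos ht]

theorem outcome_of_le {t : ℕ} (ht : k ≤ t) :
    outcome A σ k h t = fun i => (σ i).act t (outcome A σ k h) := by
  funext i
  simp only [outcome, outcomeUpTo, Function.update_self, if_neg (Nat.not_lt.mpr ht)]
  exact (σ i).adapted t _ _ fun s hs => outcomeUpTo_of_lt σ k h hs

theorem subPayoff_eq_sum_range (u : ι → ∀ t, (∀ i, A t i) → ℝ) (δ : ℝ) (i : ι) (n : ℕ)
    (hu : ∀ t, k + n ≤ t → ∀ p, u i t p = 0) :
    subPayoff A u δ σ k h i =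
      ∑ t ∈ Finset.range n, δ ^ t * u i (k + t) (outcome A σ k h (k + t)) := by
  refine tsum_eq_sum fun t ht => ?_
  rw [hu _ (by simpa using ht), mul_zero]

end Outcome

theorem sameRestriction_zero {ι : Type} {A : ℕ → ι → Type} {i : ι} (σi : PStrat A i)
    (h h' : PlayPath A) : SameRestriction A σi 0 h h' := by
  intro t _ p
  have hp (h : PlayPath A) : splice A 0 h p = p :=
    funext fun s => if_neg (Nat.not_lt_zero s)
  rw [hp, hp]

abbrev BoolAction : ℕ → Bool → Type := fun _ _ => Bool

theorem twoStageU_of_two_le (i : Bool) {t : ℕ} (ht : 2 ≤ t) (p : Bool → Bool) :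
    twoStageU i t p = 0 := by
  simp [twoStageU, show t ≠ 0 by omega, show t ≠ 1 by omega]

section Subgames

variable (σ : Profile BoolAction) (h : PlayPath BoolAction) (i : Bool)

theorem subPayoff_twoStage_zero :
    subPayoff BoolAction twoStageU 1 σ 0 h i =
      twoStageU i 0 (outcome BoolAction σ 0 h 0) +
        twoStageU i 1 (outcome BoolAction σ 0 h 1) := by
  rw [subPayoff_eq_sum_range σ 0 h _ _ i 2 fun t ht => twoStageU_of_two_le i (by omega)]
  simp [Finset.sum_range_succ]

theorem subPayoff_twoStage_one :
    subPayoff BoolAction twoStageU 1 σ 1 h i = twoStageU i 1 (outcome BoolAction σ 1 h 1) := by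
  rw [subPayoff_eq_sum_range σ 1 h _ _ i 1 fun t ht => twoStageU_of_two_le i (by omega)]
  simp

theorem subPayoff_twoStage_of_two_le {k : ℕ} (hk : 2 ≤ k) :
    subPayoff BoolAction twoStageU 1 σ k h i = 0 := by
  rw [subPayoff_eq_sum_range σ k h _ _ i 0 fun t ht => twoStageU_of_two_le i (by omega)]
  simp

theorem subPayoff_twoStage_row_one : subPayoff BoolAction twoStageU 1 σ 1 h true = 1 := by
  simp [subPayoff_twoStage_one, twoStageU]

theorem subPayoff_twoStage_row_zero_le_five :
    subPayoff BoolAction twoStageU 1 σ 0 h true ≤ 5 := by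
  rw [subPayoff_twoStage_zero]
  simp only [twoStageU, ↓reduceIte, one_ne_zero]
  split_ifs <;> norm_num

end Subgames

section Equilibrium

variable (h : PlayPath BoolAction)

theorem outcome_row_of_le {σ : Profile BoolAction} (hσ : σ true = twoStageProfile true)
    {k t : ℕ} (ht : k ≤ t) :
    outcome BoolAction σ k h t true =
      if t = 0 then true
      else outcome BoolAction σ k h 0 true && outcome BoolAction σ k h 0 false := by
  rw [outcome_of_le σ k h ht]
  show (σ true).act t _ = _
  rw [hσ]
  rfl

theorem outcome_twoStageProfile_zero :
    outcome BoolAction twoStageProfile 0 h 0 = fun _ => true := by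
  rw [outcome_of_le _ _ _ le_rfl]
  funext i
  cases i <;> rfl

theorem subPayoff_twoStageProfile_zero (i : Bool) :
    subPayoff BoolAction twoStageU 1 twoStageProfile 0 h i = 5 := by
  have h1 : outcome BoolAction twoStageProfile 0 h 1 = fun _ => true := by
    rw [outcome_of_le _ _ _ zero_le_one]
    funext j
    cases j
    · rfl
    · simp [twoStageProfile, outcome_twoStageProfile_zero]
  rw [subPayoff_twoStage_zero, outcome_twoStageProfile_zero, h1]
  cases i <;> norm_num [twoStageU]

theorem subPayoff_column_zero_le_five {σ : Profile BoolAction}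
    (hσ : σ true = twoStageProfile true) :
    subPayoff BoolAction twoStageU 1 σ 0 h false ≤ 5 := by
  have h0 := outcome_row_of_le h hσ (Nat.zero_le 0)
  have h1 := outcome_row_of_le h hσ (Nat.zero_le 1)
  simp only [↓reduceIte, one_ne_zero] at h0 h1
  rw [h0, Bool.true_and] at h1
  rw [subPayoff_twoStage_zero]
  simp only [twoStageU, ↓reduceIte, one_ne_zero, h0, h1, Bool.false_eq_true]
  cases outcome BoolAction σ 0 h 0 false <;> norm_num

theorem subPayoff_column_one {σ : Profile BoolAction} (hσ : σ true = twoStageProfile true) :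
    subPayoff BoolAction twoStageU 1 σ 1 h false = if h 0 true && h 0 false then 3 else 1 := by
  have h1 := outcome_row_of_le h hσ (le_refl 1)
  simp only [one_ne_zero, ↓reduceIte, outcome_of_lt σ 1 h zero_lt_one] at h1
  simp [subPayoff_twoStage_one, twoStageU, h1]

end Equilibrium

theorem twoStageProfile_spe : SPE BoolAction twoStageU 1 twoStageProfile := by
  intro k h i τ
  cases i
  case false =>
    have hrow : Function.update twoStageProfile false τ true = twoStageProfile true :=
      Function.update_of_ne (by decide) _ _
    rcases k with _ | _ | k
    · rw [subPayoff_twoStageProfile_zero]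
      exact subPayoff_column_zero_le_five h hrow
    · rw [subPayoff_column_one h hrow, subPayoff_column_one h rfl]
    · rw [subPayoff_twoStage_of_two_le _ _ _ (by omega),
        subPayoff_twoStage_of_two_le _ _ _ (by omega)]
  case true =>
    rcases k with _ | _ | k
    · rw [subPayoff_twoStageProfile_zero]
      exact subPayoff_twoStage_row_zero_le_five _ h
    · rw [subPayoff_twoStage_row_one, subPayoff_twoStage_row_one]
    · rw [subPayoff_twoStage_of_two_le _ _ _ (by omega),
        subPayoff_twoStage_of_two_le _ _ _ (by omega)]

theorem twoStageProfile_credible : Credible BoolAction twoStageU 1 twoStageProfile := by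
  refine ⟨twoStageProfile_spe, fun k h h' i hdiff => ?_⟩
  cases i
  · exact absurd (fun _ _ _ => rfl) hdiff
  rcases k with _ | _ | k
  · exact absurd (sameRestriction_zero _ h h') hdiff
  · rw [subPayoff_twoStage_row_one, subPayoff_twoStage_row_one]
  · rw [subPayoff_twoStage_of_two_le _ _ _ (by omega),
      subPayoff_twoStage_of_two_le _ _ _ (by omega)]

end MSG

open MSG in
/-- With `δ = 1`, the above profile is a credible
equilibrium of the two-stage game; it supports the stage-1 outcome `(B,B)`,
which is not a Nash equilibrium of the stage-1 game. -/
theorem two_stage_credible_supports_non_nash :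
    Credible (fun _ _ => Bool) twoStageU 1 twoStageProfile ∧
      (∀ h, outcome (fun _ _ => Bool) twoStageProfile 0 h 0 = fun _ => true) ∧
      ¬ (∀ (i : Bool) (a : Bool),
          twoStageU i 0 (Function.update (fun _ => true) i a) ≤
            twoStageU i 0 (fun _ => true)) := by
  refine ⟨twoStageProfile_credible, outcome_twoStageProfile_zero, fun hNash => ?_⟩
  have hColumnGain : twoStageU false 0 (fun _ => true) < twoStageU false 0
      (Function.update (fun _ => true) false false) := by
    norm_num [twoStageU]
  exact (hNash false false).not_gt hColumnGain
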